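/- arXiv:1009.0436 — 7 statements merged into one kernel-verified Lean document; each statement's English description precedes it below -/
import Mathlib

section
/- Let a, b, p, q be vectors in ℝ³ with a and b linearly independent, and let λ₁₂, λ₁₄, λ₂₃, λ₄₃, κ₁₂, κ₁₄, κ₂₃, κ₄₃ be real numbers. Suppose p = λ₁₂·a + κ₁₂·b, p = λ₄₃·a + κ₄₃·q, q = κ₁₄·a + λ₁₄·b, and q = λ₂₃·b + κ₂₃·p. Then κ₁₂ = λ₁₄·κ₄₃, κ₁₄ = λ₁₂·κ₂₃, λ₁₂ − λ₄₃ = κ₁₄·κ₄₃, and λ₁₄ − λ₂₃ = κ₁₂·κ₂₃. (Necessity part of Theorem 1: the G¹ compatibility conditions at the common vertex of a tangent-plane-continuous 4-patch surface, with a = r⁽¹⁾_u, b = r⁽¹⁾_v, p = r⁽³⁾_u, q = r⁽³⁾_v at the vertex.) -/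
/-! Substituting the expansion of `q` in the basis `a, b` into `p = λ₄₃ a + κ₄₃ q` gives a second
expansion of `p`; comparing it with `p = λ₁₂ a + κ₁₂ b` yields two of the relations. The other two
follow in the same way with the roles of `a, p` and `b, q` exchanged. -/

theorem LinearIndependent.sub_eq_mul_and_eq_mul_of_smul_add_smul
    {R M : Type*} [CommRing R] [AddCommGroup M] [Module R M] {a b p q : M}
    (hab : LinearIndependent R ![a, b]) {α β γ δ μ ν : R}
    (hp : p = α • a + β • b) (hq : q = γ • a + δ • b) (hpq : p = μ • a + ν • q) :
    α - μ = γ * ν ∧ β = δ * ν := by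
  have hp' : α • a + β • b = (μ + ν * γ) • a + (ν * δ) • b := by
    rw [← hp, hpq, hq]
    module
  obtain ⟨hα, hβ⟩ := hab.eq_of_pair hp'
  exact ⟨by linear_combination hα, by linear_combination hβ⟩

/-- Necessity part of Theorem 1: the G¹ compatibility conditions at the common
vertex of a tangent-plane-continuous 4-patch surface. -/
theorem g1_compatibility_necessary
    (a b p q : EuclideanSpace ℝ (Fin 3))
    (hab : LinearIndependent ℝ ![a, b])
    (l12 l14 l23 l43 k12 k14 k23 k43 : ℝ)
    (h1 : p = l12 • a + k12 • b)
    (h2 : p = l43 • a + k43 • q)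
    (h3 : q = k14 • a + l14 • b)
    (h4 : q = l23 • b + k23 • p) :
    k12 = l14 * k43 ∧ k14 = l12 * k23 ∧
    l12 - l43 = k14 * k43 ∧ l14 - l23 = k12 * k23 := by
  obtain ⟨hl12, hk12⟩ := hab.sub_eq_mul_and_eq_mul_of_smul_add_smul h1 h3 h2
  rw [add_comm] at h1 h3
  obtain ⟨hl14, hk14⟩ :=
    (LinearIndependent.pair_symm_iff.mp hab).sub_eq_mul_and_eq_mul_of_smul_add_smul h3 h1 h4
  exact ⟨hk12, hk14, hl12, hl14⟩
end

section
/- Let a, b be vectors in ℝ³ and let λ₁₂, λ₁₄, λ₂₃, λ₄₃, κ₁₂, κ₁₄, κ₂₃, κ₄₃ be real numbers satisfying the G¹ compatibility relations κ₁₂ = λ₁₄·κ₄₃, κ₁₄ = λ₁₂·κ₂₃, λ₁₂ − λ₄₃ = κ₁₄·κ₄₃, and λ₁₄ − λ₂₃ = κ₁₂·κ₂₃. Define p := λ₁₂·a + κ₁₂·b and q := κ₁₄·a + λ₁₄·b. Then p = λ₄₃·a + κ₄₃·q and q = λ₂₃·b + κ₂₃·p. (Sufficiency part of Theorem 1 at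 the vertex: under the compatibility conditions, the four vertex junction equations can be satisfied simultaneously.) -/
/-- Sufficiency part of Theorem 1 at the vertex: under the compatibility
conditions, the four vertex junction equations can be satisfied simultaneously. -/
theorem g1_compatibility_sufficient
    (a b : EuclideanSpace ℝ (Fin 3))
    (l12 l14 l23 l43 k12 k14 k23 k43 : ℝ)
    (h1 : k12 = l14 * k43)
    (h2 : k14 = l12 * k23)
    (h3 : l12 - l43 = k14 * k43)
    (h4 : l14 - l23 = k12 * k23) :
    l12 • a + k12 • b = l43 • a + k43 • (k14 • a + l14 • b) ∧
    k14 • a + l14 • b = l23 • b + k23 • (l12 • a + k12 • b) :=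
  ⟨by linear_combination (norm := module) h3 • a + h1 • b,
   by linear_combination (norm := module) h2 • a + h4 • b⟩
end

section
/- Let a, b be linearly independent vectors in ℝ³ and let A, B, C, S, T, W, P, Q be vectors in ℝ³. Let λ₁₂, λ₁₄, λ₂₃, λ₄₃, κ₁₂, κ₁₄, κ₂₃, κ₄₃ be real numbers satisfying the G¹ compatibility relations κ₁₂ = λ₁₄·κ₄₃, κ₁₄ = λ₁₂·κ₂₃, λ₁₂ − λ₄₃ = κ₁₄·κ₄₃, λ₁₄ − λ₂₃ = κ₁₂·κ₂₃, and let λ'₁₂, λ'₁₄, λ'₂₃, λ'₄₃, κ'₁₂, κ'₁₄, κ'₂₃, κ'₄₃, μ₁₂, ν₁₂, μ₁₄, ν₁₄ be real numbers. Assume: S = λ'₁₂·a + λ₁₂·B + κ'₁₂·b + κ₁₂·C; W = κ'₁₄·a + λ'₁₄·b + λ₁₄·B + κ₁₄·A; T = λ'₄₃·a + λ₄₃·W + κ'₄₃·(λ₁₄·b + κ₁₄·a) + κ₄₃·Q; T = λ'₂₃·b + λ₂₃·S + κ'₂₃·(λ₁₂·a + κ₁₂·b) + κ₂₃·P; P =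 λ₁₂²·A + 2λ₁₂κ₁₂·B + κ₁₂²·C + μ₁₂·a + ν₁₂·b; Q = λ₁₄²·C + 2λ₁₄κ₁₄·B + κ₁₄²·A + μ₁₄·b + ν₁₄·a. Then −λ'₄₃ − λ₄₃·κ'₁₄ + λ₂₃·λ'₁₂ + λ₁₂·κ'₂₃ − κ₁₄·κ'₄₃ + κ₂₃·μ₁₂ − κ₄₃·ν₁₄ = 0 and λ'₂₃ − λ₄₃·λ'₁₄ + λ₂₃·κ'₁₂ + κ₁₂·κ'₂₃ − λ₁₄·κ'₄₃ + κ₂₃·ν₁₂ − κ₄₃·μ₁₄ = 0 (equations (3.22) of the paper). -/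
/-!
Equating the two expansions of the mixed derivative `T` of patch 3 at the vertex, the
second-order terms `A`, `B`, `C` cancel exactly because of the G¹ compatibility relations.
What remains is a linear combination of `a` and `b` whose coefficients are the two
expressions of (3.22), so both vanish since `a` and `b` are linearly independent.
-/

section CoefficientIdentities

variable {R : Type*} [CommRing R] {l12 l14 l23 l43 k12 k14 k23 k43 : R}

theorem g1_coeff_A_eq (h2 : k14 = l12 * k23) (h3 : l12 - l43 = k14 * k43) :
    l43 * k14 + k43 * k14 ^ 2 = k23 * l12 ^ 2 := by
  subst h2
  linear_combination (-(l12 * k23)) * h3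

theorem g1_coeff_C_eq (h1 : k12 = l14 * k43) (h4 : l14 - l23 = k12 * k23) :
    k43 * l14 ^ 2 = l23 * k12 + k23 * k12 ^ 2 := by
  subst h1
  linear_combination (l14 * k43) * h4

theorem g1_coeff_B_eq (h1 : k12 = l14 * k43) (h2 : k14 = l12 * k23)
    (h3 : l12 - l43 = k14 * k43) (h4 : l14 - l23 = k12 * k23) :
    l43 * l14 + k43 * (2 * l14 * k14) = l23 * l12 + k23 * (2 * l12 * k12) := by
  subst h1 h2
  linear_combination l12 * h4 - l14 * h3

end CoefficientIdentities

theorem g2_conditions_smul_add_smul_eq_zero {R V : Type*} [CommRing R] [AddCommGroup V]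
    [Module R V] {a b A B C S T W P Q : V}
    {l12 l14 l23 l43 k12 k14 k23 k43 l12' l14' l23' l43' k12' k14' k23' k43' m12 n12 m14 n14 : R}
    (h1 : k12 = l14 * k43) (h2 : k14 = l12 * k23)
    (h3 : l12 - l43 = k14 * k43) (h4 : l14 - l23 = k12 * k23)
    (hS : S = l12' • a + l12 • B + k12' • b + k12 • C)
    (hW : W = k14' • a + l14' • b + l14 • B + k14 • A)
    (hT1 : T = l43' • a + l43 • W + k43' • (l14 • b + k14 • a) + k43 • Q)
    (hT2 : T = l23' • b + l23 • S + k23' • (l12 • a + k12 • b) + k23 • P)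
    (hP : P = (l12 ^ 2) • A + (2 * l12 * k12) • B + (k12 ^ 2) • C + m12 • a + n12 • b)
    (hQ : Q = (l14 ^ 2) • C + (2 * l14 * k14) • B + (k14 ^ 2) • A + m14 • b + n14 • a) :
    (-l43' - l43 * k14' + l23 * l12' + l12 * k23' - k14 * k43' + k23 * m12 - k43 * n14) • a
      + (l23' - l43 * l14' + l23 * k12' + k12 * k23' - l14 * k43' + k23 * n12 - k43 * m14) • b
      = 0 := by
  subst hS hW hP hQ
  linear_combination (norm := module) hT2.symm.trans hT1 + g1_coeff_A_eq h2 h3 • A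
    + g1_coeff_B_eq h1 h2 h3 h4 • B + g1_coeff_C_eq h1 h4 • C

/-- Equations (3.22) of the paper: necessary G² conditions obtained from the
mixed second derivatives at the vertex. -/
theorem g2_equations_3_22
    (a b A B C S T W P Q : EuclideanSpace ℝ (Fin 3))
    (hab : LinearIndependent ℝ ![a, b])
    (l12 l14 l23 l43 k12 k14 k23 k43 : ℝ)
    (h1 : k12 = l14 * k43)
    (h2 : k14 = l12 * k23)
    (h3 : l12 - l43 = k14 * k43)
    (h4 : l14 - l23 = k12 * k23)
    (l12' l14' l23' l43' k12' k14' k23' k43' m12 n12 m14 n14 : ℝ)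
    (hS : S = l12' • a + l12 • B + k12' • b + k12 • C)
    (hW : W = k14' • a + l14' • b + l14 • B + k14 • A)
    (hT1 : T = l43' • a + l43 • W + k43' • (l14 • b + k14 • a) + k43 • Q)
    (hT2 : T = l23' • b + l23 • S + k23' • (l12 • a + k12 • b) + k23 • P)
    (hP : P = (l12 ^ 2) • A + (2 * l12 * k12) • B + (k12 ^ 2) • C
        + m12 • a + n12 • b)
    (hQ : Q = (l14 ^ 2) • C + (2 * l14 * k14) • B + (k14 ^ 2) • A
        + m14 • b + n14 • a) :
    -l43' - l43 * k14' + l23 * l12' + l12 * k23' - k14 * k43'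
        + k23 * m12 - k43 * n14 = 0 ∧
    l23' - l43 * l14' + l23 * k12' + k12 * k23' - l14 * k43'
        + k23 * n12 - k43 * m14 = 0 :=
  LinearIndependent.pair_iff.mp hab _ _
    (g2_conditions_smul_add_smul_eq_zero h1 h2 h3 h4 hS hW hT1 hT2 hP hQ)
end

section
/- Let a, b be linearly independent vectors in ℝ³, let A, B, C, W, P, Q be vectors in ℝ³, let λ₁₂, λ₁₄, λ₂₃, λ₄₃, κ₁₂, κ₁₄, κ₂₃, κ₄₃ be real numbers satisfying the G¹ compatibility relations κ₁₂ = λ₁₄·κ₄₃, κ₁₄ = λ₁₂·κ₂₃, λ₁₂ − λ₄₃ = κ₁₄·κ₄₃, λ₁₄ − λ₂₃ = κ₁₂·κ₂₃, and let λ'₁₄, κ'₁₄, μ₁₂, ν₁₂, μ₁₄, ν₁₄, μ₄₃, ν₄₃ be real numbers. Assume: W = κ'₁₄·a + λ'₁₄·b + λ₁₄·B + κ₁₄·A; P = λ₁₂²·A + 2λ₁₂κ₁₂·B + κ₁₂²·C + μ₁₂·a + ν₁₂·b; Q = λ₁₄²·C + 2λ₁₄κ₁₄·B + κ₁₄²·A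 + μ₁₄·b + ν₁₄·a; and P = λ₄₃²·A + 2λ₄₃κ₄₃·W + κ₄₃²·Q + μ₄₃·a + ν₄₃·(λ₁₄·b + κ₁₄·a). Then μ₄₃ + 2λ₄₃κ₄₃·κ'₁₄ − μ₁₂ + ν₄₃·κ₁₄ + ν₁₄·κ₄₃² = 0 and 2λ₄₃κ₄₃·λ'₁₄ − ν₁₂ + ν₄₃·λ₁₄ + μ₁₄·κ₄₃² = 0 (equations (3.25) of the paper). -/
/-!
Substitute `W` and `Q` into the junction equation for `P` and subtract the other expression for
`P`. The second-order terms cancel: the coefficients of `A`, `B`, `C` on the two sides are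
`(λ₄₃ + κ₁₄κ₄₃)²`, `2(λ₄₃ + κ₁₄κ₄₃)λ₁₄κ₄₃`, `(λ₁₄κ₄₃)²` against `λ₁₂²`, `2λ₁₂κ₁₂`, `κ₁₂²`, which
agree by `λ₁₂ = λ₄₃ + κ₁₄κ₄₃` and `κ₁₂ = λ₁₄κ₄₃`. What is left is a linear relation between `a`
and `b`, whose two coefficients are the left-hand sides of (3.25).
-/

theorem g2_equations_3_25_general
    (a b A B C W P Q : EuclideanSpace ℝ (Fin 3))
    (hab : LinearIndependent ℝ ![a, b])
    (l12 l14 l43 k12 k14 k43 : ℝ)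
    (h1 : k12 = l14 * k43)
    (h3 : l12 - l43 = k14 * k43)
    (l14' k14' m12 n12 m14 n14 m43 n43 : ℝ)
    (hW : W = k14' • a + l14' • b + l14 • B + k14 • A)
    (hP : P = (l12 ^ 2) • A + (2 * l12 * k12) • B + (k12 ^ 2) • C
        + m12 • a + n12 • b)
    (hQ : Q = (l14 ^ 2) • C + (2 * l14 * k14) • B + (k14 ^ 2) • A
        + m14 • b + n14 • a)
    (hP' : P = (l43 ^ 2) • A + (2 * l43 * k43) • W + (k43 ^ 2) • Q
        + m43 • a + n43 • (l14 • b + k14 • a)) :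
    m43 + 2 * l43 * k43 * k14' - m12 + n43 * k14 + n14 * k43 ^ 2 = 0 ∧
    2 * l43 * k43 * l14' - n12 + n43 * l14 + m14 * k43 ^ 2 = 0 := by
  subst hW hQ h1
  obtain rfl : l12 = l43 + k14 * k43 := by linarith
  have residual :
      (m43 + 2 * l43 * k43 * k14' - m12 + n43 * k14 + n14 * k43 ^ 2) • a
        + (2 * l43 * k43 * l14' - n12 + n43 * l14 + m14 * k43 ^ 2) • b = 0 := by
    linear_combination (norm := module) hP - hP'
  exact LinearIndependent.pair_iff.mp hab _ _ residual

/-- Equations (3.25) of the paper. -/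
theorem g2_equations_3_25
    (a b A B C W P Q : EuclideanSpace ℝ (Fin 3))
    (hab : LinearIndependent ℝ ![a, b])
    (l12 l14 l23 l43 k12 k14 k23 k43 : ℝ)
    (h1 : k12 = l14 * k43)
    (h2 : k14 = l12 * k23)
    (h3 : l12 - l43 = k14 * k43)
    (h4 : l14 - l23 = k12 * k23)
    (l14' k14' m12 n12 m14 n14 m43 n43 : ℝ)
    (hW : W = k14' • a + l14' • b + l14 • B + k14 • A)
    (hP : P = (l12 ^ 2) • A + (2 * l12 * k12) • B + (k12 ^ 2) • C
        + m12 • a + n12 • b)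
    (hQ : Q = (l14 ^ 2) • C + (2 * l14 * k14) • B + (k14 ^ 2) • A
        + m14 • b + n14 • a)
    (hP' : P = (l43 ^ 2) • A + (2 * l43 * k43) • W + (k43 ^ 2) • Q
        + m43 • a + n43 • (l14 • b + k14 • a)) :
    m43 + 2 * l43 * k43 * k14' - m12 + n43 * k14 + n14 * k43 ^ 2 = 0 ∧
    2 * l43 * k43 * l14' - n12 + n43 * l14 + m14 * k43 ^ 2 = 0 :=
  g2_equations_3_25_general a b A B C W P Q hab l12 l14 l43 k12 k14 k43 h1 h3 l14' k14' m12 n12 m14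
    n14 m43 n43 hW hP hQ hP'
end

section
/- Let a, b be linearly independent vectors in ℝ³, let A, B, C, S, P, Q be vectors in ℝ³, let λ₁₂, λ₁₄, λ₂₃, λ₄₃, κ₁₂, κ₁₄, κ₂₃, κ₄₃ be real numbers satisfying the G¹ compatibility relations κ₁₂ = λ₁₄·κ₄₃, κ₁₄ = λ₁₂·κ₂₃, λ₁₂ − λ₄₃ = κ₁₄·κ₄₃, λ₁₄ − λ₂₃ = κ₁₂·κ₂₃, and let λ'₁₂, κ'₁₂, μ₁₂, ν₁₂, μ₁₄, ν₁₄, μ₂₃, ν₂₃ be real numbers. Assume: S = λ'₁₂·a + λ₁₂·B + κ'₁₂·b + κ₁₂·C; P = λ₁₂²·A + 2λ₁₂κ₁₂·B + κ₁₂²·C + μ₁₂·a + ν₁₂·b; Q = λ₁₄²·C + 2λ₁₄κ₁₄·B + κ₁₄²·A + μ₁₄·b + ν₁₄·a; and Q = λ₂₃²·C + 2λ₂₃κ₂₃·S + κ₂₃²·P + μ₂₃·b + ν₂₃·(λ₁₂·a + κ₁₂·b). Then 2λ₂₃·λ'₁₂·κ₂₃ − ν₁₄ + ν₂₃·λ₁₂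 + μ₁₂·κ₂₃² = 0 and μ₂₃ + 2λ₂₃κ₂₃·κ'₁₂ − μ₁₄ + ν₂₃·κ₁₂ + ν₁₂·κ₂₃² = 0 (equations (3.26) of the paper). -/
/-!
Both sides of the junction equation for `Q` are second derivatives at the vertex, written in the
basis `a, b` of the tangent plane plus their second-order part in `A, B, C`. The G¹ relations
`κ₁₄ = λ₁₂ κ₂₃` and `λ₁₄ = λ₂₃ + κ₁₂ κ₂₃` say that the two directions in which these second
derivatives are taken coincide, so the second-order parts cancel; since `a` and `b` are linearly
independent, the coefficients of `a` and `b` left over must vanish, which is (3.26).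
-/

section SecondDirDeriv

variable {R M : Type*} [CommRing R] [AddCommGroup M] [Module R M]

/-- With `A, B, C = r_uu, r_uv, r_vv`, this is the second-order part of `r_ww` for the direction
`w = x ∂_u + y ∂_v`. -/
def secondDirDeriv (A B C : M) (x y : R) : M :=
  (x ^ 2) • A + (2 * x * y) • B + (y ^ 2) • C

lemma secondDirDeriv_junction {a b A B C S P : M} {l12 k12 l12' k12' m12 n12 : R} (l23 k23 : R)
    (hS : S = l12' • a + l12 • B + k12' • b + k12 • C)
    (hP : P = secondDirDeriv A B C l12 k12 + m12 • a + n12 • b) :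
    (l23 ^ 2) • C + (2 * l23 * k23) • S + (k23 ^ 2) • P =
      secondDirDeriv A B C (k23 * l12) (l23 + k23 * k12)
        + (2 * l23 * k23 * l12' + k23 ^ 2 * m12) • a
        + (2 * l23 * k23 * k12' + k23 ^ 2 * n12) • b := by
  subst hS hP
  unfold secondDirDeriv
  module

end SecondDirDeriv

theorem g2_equations_3_26_general
    (a b A B C S P Q : EuclideanSpace ℝ (Fin 3))
    (hab : LinearIndependent ℝ ![a, b])
    (l12 l14 l23 k12 k14 k23 : ℝ)
    (h2 : k14 = l12 * k23)
    (h4 : l14 - l23 = k12 * k23)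
    (l12' k12' m12 n12 m14 n14 m23 n23 : ℝ)
    (hS : S = l12' • a + l12 • B + k12' • b + k12 • C)
    (hP : P = (l12 ^ 2) • A + (2 * l12 * k12) • B + (k12 ^ 2) • C
        + m12 • a + n12 • b)
    (hQ : Q = (l14 ^ 2) • C + (2 * l14 * k14) • B + (k14 ^ 2) • A
        + m14 • b + n14 • a)
    (hQ' : Q = (l23 ^ 2) • C + (2 * l23 * k23) • S + (k23 ^ 2) • P
        + m23 • b + n23 • (l12 • a + k12 • b)) :
    2 * l23 * l12' * k23 - n14 + n23 * l12 + m12 * k23 ^ 2 = 0 ∧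
    m23 + 2 * l23 * k23 * k12' - m14 + n23 * k12 + n12 * k23 ^ 2 = 0 := by
  have hk14 : k23 * l12 = k14 := by rw [h2, mul_comm]
  have hl14 : l23 + k23 * k12 = l14 := by linarith
  have hQ₁ : Q = secondDirDeriv A B C k14 l14 + n14 • a + m14 • b := by
    rw [hQ]; unfold secondDirDeriv; module
  have hQ₂ : Q = secondDirDeriv A B C k14 l14
      + (2 * l23 * k23 * l12' + k23 ^ 2 * m12 + n23 * l12) • a
      + (2 * l23 * k23 * k12' + k23 ^ 2 * n12 + m23 + n23 * k12) • b := by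
    rw [hQ', secondDirDeriv_junction l23 k23 hS hP, hk14, hl14]; module
  obtain ⟨ha, hb⟩ := LinearIndependent.pair_iff.mp hab
    (2 * l23 * k23 * l12' + k23 ^ 2 * m12 + n23 * l12 - n14)
    (2 * l23 * k23 * k12' + k23 ^ 2 * n12 + m23 + n23 * k12 - m14)
    (by rw [← sub_eq_zero.mpr (hQ₂.symm.trans hQ₁)]; module)
  constructor <;> linarith

/-- Equations (3.26) of the paper. -/
theorem g2_equations_3_26
    (a b A B C S P Q : EuclideanSpace ℝ (Fin 3))
    (hab : LinearIndependent ℝ ![a, b])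
    (l12 l14 l23 l43 k12 k14 k23 k43 : ℝ)
    (h1 : k12 = l14 * k43)
    (h2 : k14 = l12 * k23)
    (h3 : l12 - l43 = k14 * k43)
    (h4 : l14 - l23 = k12 * k23)
    (l12' k12' m12 n12 m14 n14 m23 n23 : ℝ)
    (hS : S = l12' • a + l12 • B + k12' • b + k12 • C)
    (hP : P = (l12 ^ 2) • A + (2 * l12 * k12) • B + (k12 ^ 2) • C
        + m12 • a + n12 • b)
    (hQ : Q = (l14 ^ 2) • C + (2 * l14 * k14) • B + (k14 ^ 2) • A
        + m14 • b + n14 • a)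
    (hQ' : Q = (l23 ^ 2) • C + (2 * l23 * k23) • S + (k23 ^ 2) • P
        + m23 • b + n23 • (l12 • a + k12 • b)) :
    2 * l23 * l12' * k23 - n14 + n23 * l12 + m12 * k23 ^ 2 = 0 ∧
    m23 + 2 * l23 * k23 * k12' - m14 + n23 * k12 + n12 * k23 ^ 2 = 0 :=
  g2_equations_3_26_general a b A B C S P Q hab l12 l14 l23 k12 k14 k23 h2 h4 l12' k12' m12 n12 m14
    n14 m23 n23 hS hP hQ hQ'
end

section
/- Let a, b be linearly independent vectors in ℝ³ and let A, B, C, S, T, W, P, Q be vectors in ℝ³. Let λ₁₂, λ₁₄, λ₂₃, λ₄₃, κ₁₂, κ₁₄, κ₂₃, κ₄₃ be real numbers satisfying the G¹ compatibility relations κ₁₂ = λ₁₄·κ₄₃, κ₁₄ = λ₁₂·κ₂₃, λ₁₂ − λ₄₃ = κ₁₄·κ₄₃, λ₁₄ − λ₂₃ = κ₁₂·κ₂₃, and let λ'₁₂, λ'₁₄, λ'₂₃, λ'₄₃, κ'₁₂, κ'₁₄, κ'₂₃, κ'₄₃, μ₁₂, ν₁₂, μ₁₄, ν₁₄, μ₂₃,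 ν₂₃, μ₄₃, ν₄₃ be real numbers. Assume the eight vertex equations: S = λ'₁₂·a + λ₁₂·B + κ'₁₂·b + κ₁₂·C; T = λ'₄₃·a + λ₄₃·W + κ'₄₃·(λ₁₄·b + κ₁₄·a) + κ₄₃·Q; W = κ'₁₄·a + λ'₁₄·b + λ₁₄·B + κ₁₄·A; T = λ'₂₃·b + λ₂₃·S + κ'₂₃·(λ₁₂·a + κ₁₂·b) + κ₂₃·P; P = λ₁₂²·A + 2λ₁₂κ₁₂·B + κ₁₂²·C + μ₁₂·a + ν₁₂·b; P = λ₄₃²·A + 2λ₄₃κ₄₃·W + κ₄₃²·Q + μ₄₃·a + ν₄₃·(λ₁₄·b + κ₁₄·a); Q = λ₂₃²·C + 2λ₂₃κ₂₃·S + κ₂₃²·P + μ₂₃·b + ν₂₃·(λ₁₂·a + κ₁₂·b); Q = λ₁₄²·C + 2λ₁₄κ₁₄·B + κ₁₄²·A + μ₁₄·b + ν₁₄·a. Then all six G² compatibility relations of Theorem 2 hold: (i) 2λ₄₃λ'₁₄κ₄₃ − ν₁₂ + ν₄₃λ₁₄ + μ₁₄κ₄₃² = 0; (ii) 2λ₂₃λ'₁₂κ₂₃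 − ν₁₄ + ν₂₃λ₁₂ + μ₁₂κ₂₃² = 0; (iii) 2λ₄₃κ₄₃κ'₁₄ − μ₁₂ + μ₄₃ + ν₄₃κ₁₄ + ν₁₄κ₄₃² = 0; (iv) 2λ₂₃κ₂₃κ'₁₂ − μ₁₄ + μ₂₃ + ν₂₃κ₁₂ + ν₁₂κ₂₃² = 0; (v) λ'₄₃ − λ₂₃λ'₁₂ + λ₄₃κ'₁₄ − λ₁₂κ'₂₃ + κ₁₄κ'₄₃ − μ₁₂κ₂₃ + ν₁₄κ₄₃ = 0; (vi) λ'₂₃ − λ₄₃λ'₁₄ + λ₂₃κ'₁₂ − λ₁₄κ'₄₃ + κ₁₂κ'₂₃ − μ₁₄κ₄₃ + ν₁₂κ₂₃ = 0. (Necessity part of Theorem 2: the G² compatibility conditions at the common vertex of a curvature-continuous 4-patch surface.) -/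
/-!
Each second-order quantity at the vertex is expanded in two ways, once through each of the two
junctions meeting it: `P = r⁽²⁾_uu = r⁽³⁾_uu` via the junctions 1–2 and 4–3, `Q = r⁽⁴⁾_vv = r⁽³⁾_vv`
via 1–4 and 2–3, and the twist `T = r⁽³⁾_uv` via 4–3 and 2–3. After the G¹ compatibility
relations are imposed, the terms in `A`, `B`, `C` cancel from the difference of the two
expansions, leaving a combination `x • a + y • b = 0`; linear independence of `a` and `b` makes
both coefficients vanish, and these coefficients are the six G² compatibility relations.
Relabelling `u ↔ v` exchanges the junctions 2 and 4, so the `Q`-relations are the `P`-relations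
with the roles of `a` and `b` swapped.
-/

section

variable {R M : Type*} [CommRing R] [AddCommGroup M] [Module R M]
  {a b A B C S T W P Q : M}
  {l12 l14 l23 l43 k12 k14 k23 k43 l12' l14' l23' l43' k12' k14' k23' k43' : R}
  {m12 n12 m14 n14 m23 n23 m43 n43 : R}

theorem g2_compatibility_of_second_derivatives (hab : LinearIndependent R ![a, b])
    (h1 : k12 = l14 * k43) (h3 : l12 - l43 = k14 * k43)
    (hW : W = k14' • a + l14' • b + l14 • B + k14 • A)
    (hP : P = (l12 ^ 2) • A + (2 * l12 * k12) • B + (k12 ^ 2) • C + m12 • a + n12 • b)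
    (hP' : P = (l43 ^ 2) • A + (2 * l43 * k43) • W + (k43 ^ 2) • Q
        + m43 • a + n43 • (l14 • b + k14 • a))
    (hQ : Q = (l14 ^ 2) • C + (2 * l14 * k14) • B + (k14 ^ 2) • A + m14 • b + n14 • a) :
    2 * l43 * l14' * k43 - n12 + n43 * l14 + m14 * k43 ^ 2 = 0 ∧
    2 * l43 * k43 * k14' - m12 + m43 + n43 * k14 + n14 * k43 ^ 2 = 0 := by
  have hcomb : (2 * l43 * k43 * k14' - m12 + m43 + n43 * k14 + n14 * k43 ^ 2) • a
      + (2 * l43 * l14' * k43 - n12 + n43 * l14 + m14 * k43 ^ 2) • b = 0 := by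
    obtain rfl : l43 = l12 - k14 * k43 := by linear_combination -h3
    subst h1 hW hQ
    linear_combination (norm := module) hP - hP'
  exact (LinearIndependent.pair_iff.1 hab _ _ hcomb).symm

theorem g2_compatibility_of_twists (hab : LinearIndependent R ![a, b])
    (h1 : k12 = l14 * k43) (h2 : k14 = l12 * k23)
    (h3 : l12 - l43 = k14 * k43) (h4 : l14 - l23 = k12 * k23)
    (hS : S = l12' • a + l12 • B + k12' • b + k12 • C)
    (hT1 : T = l43' • a + l43 • W + k43' • (l14 • b + k14 • a) + k43 • Q)
    (hW : W = k14' • a + l14' • b + l14 • B + k14 • A)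
    (hT2 : T = l23' • b + l23 • S + k23' • (l12 • a + k12 • b) + k23 • P)
    (hP : P = (l12 ^ 2) • A + (2 * l12 * k12) • B + (k12 ^ 2) • C + m12 • a + n12 • b)
    (hQ : Q = (l14 ^ 2) • C + (2 * l14 * k14) • B + (k14 ^ 2) • A + m14 • b + n14 • a) :
    l43' - l23 * l12' + l43 * k14' - l12 * k23' + k14 * k43' - m12 * k23 + n14 * k43 = 0 ∧
    l23' - l43 * l14' + l23 * k12' - l14 * k43' + k12 * k23' - m14 * k43 + n12 * k23 = 0 := by
  have hcomb : (l43' - l23 * l12' + l43 * k14' - l12 * k23' + k14 * k43' - m12 * k23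
        + n14 * k43) • a
      + (-(l23' - l43 * l14' + l23 * k12' - l14 * k43' + k12 * k23' - m14 * k43
        + n12 * k23)) • b = 0 := by
    obtain rfl : l43 = l12 - k14 * k43 := by linear_combination -h3
    obtain rfl : l23 = l14 - k12 * k23 := by linear_combination -h4
    subst h1 h2 hS hW hP hQ
    linear_combination (norm := module) hT2 - hT1
  obtain ⟨hv, hvi⟩ := LinearIndependent.pair_iff.1 hab _ _ hcomb
  exact ⟨hv, neg_eq_zero.1 hvi⟩

end

/-- Necessity part of Theorem 2: the G² compatibility conditions at the common
vertex of a curvature-continuous 4-patch surface. -/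
theorem g2_compatibility_necessary
    (a b A B C S T W P Q : EuclideanSpace ℝ (Fin 3))
    (hab : LinearIndependent ℝ ![a, b])
    (l12 l14 l23 l43 k12 k14 k23 k43 : ℝ)
    (h1 : k12 = l14 * k43)
    (h2 : k14 = l12 * k23)
    (h3 : l12 - l43 = k14 * k43)
    (h4 : l14 - l23 = k12 * k23)
    (l12' l14' l23' l43' k12' k14' k23' k43'
      m12 n12 m14 n14 m23 n23 m43 n43 : ℝ)
    (hS : S = l12' • a + l12 • B + k12' • b + k12 • C)
    (hT1 : T = l43' • a + l43 • W + k43' • (l14 • b + k14 • a) + k43 • Q)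
    (hW : W = k14' • a + l14' • b + l14 • B + k14 • A)
    (hT2 : T = l23' • b + l23 • S + k23' • (l12 • a + k12 • b) + k23 • P)
    (hP : P = (l12 ^ 2) • A + (2 * l12 * k12) • B + (k12 ^ 2) • C
        + m12 • a + n12 • b)
    (hP' : P = (l43 ^ 2) • A + (2 * l43 * k43) • W + (k43 ^ 2) • Q
        + m43 • a + n43 • (l14 • b + k14 • a))
    (hQ' : Q = (l23 ^ 2) • C + (2 * l23 * k23) • S + (k23 ^ 2) • P
        + m23 • b + n23 • (l12 • a + k12 • b))
    (hQ : Q = (l14 ^ 2) • C + (2 * l14 * k14) • B + (k14 ^ 2) • A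
        + m14 • b + n14 • a) :
    2 * l43 * l14' * k43 - n12 + n43 * l14 + m14 * k43 ^ 2 = 0 ∧
    2 * l23 * l12' * k23 - n14 + n23 * l12 + m12 * k23 ^ 2 = 0 ∧
    2 * l43 * k43 * k14' - m12 + m43 + n43 * k14 + n14 * k43 ^ 2 = 0 ∧
    2 * l23 * k23 * k12' - m14 + m23 + n23 * k12 + n12 * k23 ^ 2 = 0 ∧
    l43' - l23 * l12' + l43 * k14' - l12 * k23' + k14 * k43'
      - m12 * k23 + n14 * k43 = 0 ∧
    l23' - l43 * l14' + l23 * k12' - l14 * k43' + k12 * k23'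
      - m14 * k43 + n12 * k23 = 0 := by
  obtain ⟨hi, hiii⟩ := g2_compatibility_of_second_derivatives hab h1 h3 hW hP hP' hQ
  have hS' : S = k12' • b + l12' • a + l12 • B + k12 • C := by rw [hS]; module
  obtain ⟨hii, hiv⟩ := g2_compatibility_of_second_derivatives
    (LinearIndependent.pair_symm_iff.1 hab) h2 h4 hS' hQ hQ' hP
  obtain ⟨hv, hvi⟩ := g2_compatibility_of_twists hab h1 h2 h3 h4 hS hT1 hW hT2 hP hQ
  exact ⟨hi, hii, hiii, hiv, hv, hvi⟩
end

section
/- Let q¹₂₂, q¹₂₃, q¹₃₂, q¹₃₃ be vectors in ℝ³ and λ₁₂, λ₁₄, α₂₃, α₄₃, β₂₃, β₄₃ real numbers. Let q²₀₂, q²₀₃, q²₁₂, q²₁₃ be vectors in ℝ³ satisfying q²₀₃ = q¹₃₃, q²₀₂ = q¹₃₂, q²₁₃ − q²₀₃ = λ₁₂·(q¹₃₃ − q¹₂₃), q²₁₂ − q²₀₂ = λ₁₂·(q¹₃₂ − q¹₂₂); and let q⁴₂₀, q⁴₃₀, q⁴₂₁, q⁴₃₁ be vectors in ℝ³ satisfying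 q⁴₃₀ = q¹₃₃, q⁴₂₀ = q¹₂₃, q⁴₃₁ − q⁴₃₀ = λ₁₄·(q¹₃₃ − q¹₃₂), q⁴₂₁ − q⁴₂₀ = λ₁₄·(q¹₂₃ − q¹₂₂). Define Q₂₃ := 9λ₁₄·(q²₁₃ − q²₁₂) + 6α₂₃·(q²₀₃ − q²₀₂) + 9β₂₃·(q²₁₃ − q²₀₃) − 15λ₁₄·(q²₀₃ − q²₀₂) and Q₄₃ := 9λ₁₂·(q⁴₃₁ − q⁴₂₁) + 6α₄₃·(q⁴₃₀ − q⁴₂₀) + 9β₄₃·(q⁴₃₁ − q⁴₃₀) − 15λ₁₂·(q⁴₃₀ − q⁴₂₀). Then Q₂₃ − Q₄₃ = (9λ₁₂β₂₃ − 6(α₄₃ − λ₁₂))·(q¹₃₃ − q¹₂₃) + (6(α₂₃ − λ₁₄) − 9λ₁₄β₄₃)·(q¹₃₃ − q¹₃₂). Consequently, if q¹₃₃ − q¹₂₃ and q¹₃₃ − q¹₃₂ are linearly independent, then Q₂₃ = Q₄₃ if and only if 3λ₁₂·β₂₃ = 2(α₄₃ − λ₁₂) and 3λ₁₄·β₄₃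 = 2(α₂₃ − λ₁₄) (condition (4.19) of the paper, characterizing unique consistent definition of the corner control point q⁽³⁾₁,₁). -/
/-! After substituting the boundary and junction relations, both `Q₂₃` and `Q₄₃` are combinations
of the three differences `q¹₃₃ - q¹₂₃`, `q¹₃₃ - q¹₃₂` and the twist `q¹₃₃ - q¹₂₃ - q¹₃₂ + q¹₂₂`.
The twist enters both with the same coefficient `9 λ₁₂ λ₁₄`, so it cancels in `Q₂₃ - Q₄₃`; when
the two remaining differences are linearly independent, `Q₂₃ = Q₄₃` amounts to the vanishing of
both coefficients. -/

section

variable {R M : Type*} [CommRing R] [AddCommGroup M] [Module R M]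

theorem LinearIndependent.eq_iff_of_sub_eq_smul_add_smul {x y P Q : M}
    (hxy : LinearIndependent R ![x, y]) {s t : R} (hPQ : P - Q = s • x + t • y) :
    P = Q ↔ s = 0 ∧ t = 0 := by
  constructor
  · intro hEq
    exact LinearIndependent.pair_iff.mp hxy s t (by rw [← hPQ, hEq, sub_self])
  · rintro ⟨rfl, rfl⟩
    rwa [zero_smul, zero_smul, add_zero, sub_eq_zero] at hPQ

theorem corner_difference_eq
    {q1_22 q1_23 q1_32 q1_33 q2_02 q2_03 q2_12 q2_13 q4_20 q4_30 q4_21 q4_31 : M}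
    {l12 l14 a23 a43 b23 b43 : R}
    (h2a : q2_03 = q1_33) (h2b : q2_02 = q1_32)
    (h2c : q2_13 - q2_03 = l12 • (q1_33 - q1_23))
    (h2d : q2_12 - q2_02 = l12 • (q1_32 - q1_22))
    (h4a : q4_30 = q1_33) (h4b : q4_20 = q1_23)
    (h4c : q4_31 - q4_30 = l14 • (q1_33 - q1_32))
    (h4d : q4_21 - q4_20 = l14 • (q1_23 - q1_22)) :
    ((9 * l14) • (q2_13 - q2_12) + (6 * a23) • (q2_03 - q2_02)
        + (9 * b23) • (q2_13 - q2_03) - (15 * l14) • (q2_03 - q2_02))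
      - ((9 * l12) • (q4_31 - q4_21) + (6 * a43) • (q4_30 - q4_20)
        + (9 * b43) • (q4_31 - q4_30) - (15 * l12) • (q4_30 - q4_20))
      = (9 * l12 * b23 - 6 * (a43 - l12)) • (q1_33 - q1_23)
        + (6 * (a23 - l14) - 9 * l14 * b43) • (q1_33 - q1_32) := by
  rw [sub_eq_iff_eq_add] at h2c h2d h4c h4d
  subst h2a h2b h4a h4b h2c h2d h4c h4d
  module

end

/-- Condition (4.19) of the paper: the corner control point q⁽³⁾₁,₁ of the new
quintic patch is uniquely (consistently) defined if and only if the
coefficients satisfy 3λ₁₂β₂₃ = 2(α₄₃ − λ₁₂) and 3λ₁₄β₄₃ = 2(α₂₃ − λ₁₄). -/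
theorem corner_control_point_compatibility
    (q1_22 q1_23 q1_32 q1_33 : EuclideanSpace ℝ (Fin 3))
    (l12 l14 a23 a43 b23 b43 : ℝ)
    (q2_02 q2_03 q2_12 q2_13 : EuclideanSpace ℝ (Fin 3))
    (h2a : q2_03 = q1_33)
    (h2b : q2_02 = q1_32)
    (h2c : q2_13 - q2_03 = l12 • (q1_33 - q1_23))
    (h2d : q2_12 - q2_02 = l12 • (q1_32 - q1_22))
    (q4_20 q4_30 q4_21 q4_31 : EuclideanSpace ℝ (Fin 3))
    (h4a : q4_30 = q1_33)
    (h4b : q4_20 = q1_23)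
    (h4c : q4_31 - q4_30 = l14 • (q1_33 - q1_32))
    (h4d : q4_21 - q4_20 = l14 • (q1_23 - q1_22))
    (Q23 Q43 : EuclideanSpace ℝ (Fin 3))
    (hQ23 : Q23 = (9 * l14) • (q2_13 - q2_12) + (6 * a23) • (q2_03 - q2_02)
        + (9 * b23) • (q2_13 - q2_03) - (15 * l14) • (q2_03 - q2_02))
    (hQ43 : Q43 = (9 * l12) • (q4_31 - q4_21) + (6 * a43) • (q4_30 - q4_20)
        + (9 * b43) • (q4_31 - q4_30) - (15 * l12) • (q4_30 - q4_20)) :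
    Q23 - Q43 = (9 * l12 * b23 - 6 * (a43 - l12)) • (q1_33 - q1_23)
        + (6 * (a23 - l14) - 9 * l14 * b43) • (q1_33 - q1_32) ∧
    (LinearIndependent ℝ ![q1_33 - q1_23, q1_33 - q1_32] →
      (Q23 = Q43 ↔
        3 * l12 * b23 = 2 * (a43 - l12) ∧ 3 * l14 * b43 = 2 * (a23 - l14))) := by
  have hdiff : Q23 - Q43 = (9 * l12 * b23 - 6 * (a43 - l12)) • (q1_33 - q1_23)
      + (6 * (a23 - l14) - 9 * l14 * b43) • (q1_33 - q1_32) := by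
    rw [hQ23, hQ43]
    exact corner_difference_eq h2a h2b h2c h2d h4a h4b h4c h4d
  refine ⟨hdiff, fun hli => ?_⟩
  rw [hli.eq_iff_of_sub_eq_smul_add_smul hdiff]
  apply and_congr <;> constructor <;> intro h <;> linarith
end
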